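/- arXiv:1303.5527 — 3 statements merged into one kernel-verified Lean document; each statement's English description precedes it below -/
import Mathlib

section
/- Let G be an r-regular simple graph on n vertices. Then, as an identity of polynomials in λ, (λ - n + 2 + 2r)·f(λ, G^c) = (-1)^n·(λ - 2n + 2 + 2r)·f(n - 2 - λ, G), where G^c is the complement of G. -/
open Classical

/-- The four symbols `0, 1, +, -` used in `xyz`-transformations. -/
inductive XYZ : Type
  | zero | one | plus | minus

namespace XYZ

/-- The relation on the vertices of a graph `H` given by a symbol:
`0` gives the empty graph, `1` the complete graph, `+` the graph itself,
`-` its complement. -/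
def rel {W : Type*} (H : SimpleGraph W) : XYZ → W → W → Prop
  | .zero => fun _ _ => False
  | .one  => fun u v => u ≠ v
  | .plus => fun u v => H.Adj u v
  | .minus => fun u v => u ≠ v ∧ ¬ H.Adj u v

/-- The incidence relation between a vertex and an edge given by a symbol `z`:
`+` means incident, `-` means non-incident, `0` never, `1` always. -/
def inc {W : Type*} (G : SimpleGraph W) : XYZ → W → G.edgeSet → Prop
  | .zero => fun _ _ => False
  | .one  => fun _ _ => True
  | .plus => fun v e => v ∈ (e : Sym2 W)
  | .minus => fun v e => v ∉ (e : Sym2 W)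

theorem rel_symm {W : Type*} (H : SimpleGraph W) (x : XYZ) {u v : W}
    (h : rel H x u v) : rel H x v u := by
  cases x with
  | zero => exact h.elim
  | one => exact (h : u ≠ v).symm
  | plus => exact H.adj_symm h
  | minus => exact ⟨(h.1).symm, fun h' => h.2 (H.adj_symm h')⟩

theorem rel_irrefl {W : Type*} (H : SimpleGraph W) (x : XYZ) {u : W}
    (h : rel H x u u) : False := by
  cases x with
  | zero => exact h
  | one => exact h rfl
  | plus => exact H.irrefl h
  | minus => exact h.1 rfl

end XYZ

/-- The `xyz`-transformation `G^{xyz}` of a graph `G`: its vertex set is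
`V(G) ⊕ E(G)`; two vertices of `G` are adjacent according to the symbol `x`
(applied to `G`), two edges according to the symbol `y` (applied to the line
graph of `G`), and a vertex and an edge according to the symbol `z`
(`+` = incidence graph `B(G)`, `-` = non-incidence graph `B^c(G)`,
`0` = no vertex-edge edges, `1` = all vertex-edge edges). -/
def xyzTransform {V : Type*} (G : SimpleGraph V) (x y z : XYZ) :
    SimpleGraph (V ⊕ G.edgeSet) where
  Adj a b :=
    match a, b with
    | Sum.inl u, Sum.inl v => XYZ.rel G x u v
    | Sum.inr e, Sum.inr f => XYZ.rel G.lineGraph y e f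
    | Sum.inl v, Sum.inr e => XYZ.inc G z v e
    | Sum.inr e, Sum.inl v => XYZ.inc G z v e
  symm := by
    constructor
    rintro (u | e) (v | f) h
    · exact XYZ.rel_symm G x h
    · exact h
    · exact h
    · exact XYZ.rel_symm G.lineGraph y h
  loopless := by
    constructor
    rintro (u | e) h
    · exact XYZ.rel_irrefl G x h
    · exact XYZ.rel_irrefl G.lineGraph y h

/-- The signless Laplacian matrix `Q(G) = D(G) + A(G)` of a graph. -/
noncomputable def signlessLaplacian {V : Type*} [Fintype V] (G : SimpleGraph V) :
    Matrix V V ℝ :=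
  Matrix.of fun u v =>
    (if u = v then (G.degree u : ℝ) else 0) + (if G.Adj u v then 1 else 0)

/-- The signless Laplacian characteristic polynomial
`f(λ, G) = det (λ I - Q(G))`, evaluated at a real number `λ`. -/
noncomputable def fQ {V : Type*} [Fintype V] (G : SimpleGraph V) (lam : ℝ) : ℝ :=
  Matrix.det (lam • (1 : Matrix V V ℝ) - signlessLaplacian G)

/-!
For `r`-regular `G` put `M = (λ - n + 2 + r) I + A(G)`. Then `λ I - Q(Gᶜ) = M - J` and
`(n - 2 - λ) I - Q(G) = -M`, where `J` is the all-ones matrix, and the all-ones vector is an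
eigenvector of `M` with eigenvalue `s = λ - n + 2 + 2r`. Subtracting the rank-one matrix
`J = 𝟙 𝟙ᵀ` built on that eigenvector changes the determinant by the rule
`s · det (M - J) = (s - n) · det M`, and the two sides of the identity are exactly these two
products.
-/

namespace Matrix

variable {n R : Type*} [Fintype n] [DecidableEq n] [CommRing R]

/- Multiplying the bordered matrix `[[M, u], [vᵀ, 1]]` on the right by `[[1, -u], [0, s]]` clears
the top right block because `M u = s u`; comparing the two block determinants gives the identity. -/
theorem mul_det_sub_vecMulVec_of_mulVec_eq_smul (M : Matrix n n R) {s : R} {u : n → R}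
    (v : n → R) (h : M *ᵥ u = s • u) :
    s * (M - vecMulVec u v).det = (s - v ⬝ᵥ u) * M.det := by
  have hbordered : (fromBlocks M (replicateCol Unit u) (replicateRow Unit v) 1).det =
      (M - vecMulVec u v).det := by
    rw [det_fromBlocks_one₂₂, vecMulVec_eq Unit]
  have hclear : (fromBlocks 1 (-replicateCol Unit u) 0 (s • 1 : Matrix Unit Unit R)).det = s := by
    simp [det_fromBlocks_zero₂₁]
  have hprod : fromBlocks M (replicateCol Unit u) (replicateRow Unit v) 1 *
      fromBlocks 1 (-replicateCol Unit u) 0 (s • 1 : Matrix Unit Unit R) =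
      fromBlocks M 0 (replicateRow Unit v) ((s - v ⬝ᵥ u) • 1) := by
    rw [fromBlocks_multiply, Matrix.mul_neg, ← replicateCol_mulVec, h]
    ext (i | i) (j | j) <;> simp [sub_eq_neg_add]
  have := congrArg det hprod
  rw [det_mul, hbordered, hclear, det_fromBlocks_zero₁₂] at this
  simpa [mul_comm] using this

end Matrix

namespace SimpleGraph

variable {V : Type*} [Fintype V] (G : SimpleGraph V)

theorem signlessLaplacian_apply_self (v : V) : signlessLaplacian G v v = G.degree v := by
  simp [signlessLaplacian]

theorem signlessLaplacian_apply_of_ne {u v : V} (h : u ≠ v) :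
    signlessLaplacian G u v = G.adjMatrix ℝ u v := by
  simp [signlessLaplacian, h]

variable {G} {r : ℕ}

theorem IsRegularOfDegree.signlessLaplacian_eq (hG : G.IsRegularOfDegree r) :
    signlessLaplacian G = (r : ℝ) • 1 + G.adjMatrix ℝ := by
  ext u v
  by_cases huv : u = v
  · subst huv
    simp [signlessLaplacian_apply_self, hG u]
  · simp [signlessLaplacian_apply_of_ne G huv, huv]

theorem IsRegularOfDegree.signlessLaplacian_compl_eq (hG : G.IsRegularOfDegree r) :
    signlessLaplacian Gᶜ =
      ((Fintype.card V : ℝ) - 2 - r) • 1 + Matrix.of 1 - G.adjMatrix ℝ := by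
  ext u v
  by_cases huv : u = v
  · subst huv
    have hr : r < Fintype.card V := hG u ▸ G.degree_lt_card_verts u
    rw [signlessLaplacian_apply_self, degree_compl, hG u, Nat.sub_sub, Nat.cast_sub (by omega)]
    simp only [Matrix.sub_apply, Matrix.add_apply, Matrix.smul_apply, Matrix.one_apply_eq,
      Matrix.of_apply, Pi.one_apply, adjMatrix_apply, G.irrefl, if_false, smul_eq_mul]
    push_cast
    ring
  · by_cases hadj : G.Adj u v <;> simp [signlessLaplacian_apply_of_ne _ huv, huv, hadj]

end SimpleGraph

open Matrix in
theorem signless_charpoly_complement {V : Type*} [Fintype V] (G : SimpleGraph V) (r n : ℕ)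
    (hn : Fintype.card V = n) (hreg : G.IsRegularOfDegree r) :
    ∀ lam : ℝ,
      (lam - n + 2 + 2 * r) * fQ Gᶜ lam =
        (-1 : ℝ) ^ n * (lam - 2 * n + 2 + 2 * r) * fQ G ((n : ℝ) - 2 - lam) := by
  subst hn
  intro lam
  set n := Fintype.card V
  set M : Matrix V V ℝ := (lam - n + 2 + r) • 1 + G.adjMatrix ℝ
  have hM : M *ᵥ 1 = (lam - n + 2 + 2 * r) • 1 := by
    ext v
    simp [M, add_mulVec, smul_mulVec, hreg v, two_mul, add_assoc]
  have hcompl : fQ Gᶜ lam = (M - vecMulVec 1 1).det := by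
    have hJ : vecMulVec (1 : V → ℝ) (1 : V → ℝ) = of 1 := by
      ext
      simp [vecMulVec]
    rw [fQ, hreg.signlessLaplacian_compl_eq, hJ]
    congr 1
    module
  have hself : fQ G (n - 2 - lam) = (-1) ^ n * M.det := by
    rw [fQ, hreg.signlessLaplacian_eq, ← det_neg]
    congr 1
    module
  have hsign : ((-1 : ℝ) ^ n) ^ 2 = 1 := by
    rw [← pow_mul, mul_comm, pow_mul, neg_one_sq, one_pow]
  rw [hcompl, hself, M.mul_det_sub_vecMulVec_of_mulVec_eq_smul 1 hM]
  simp only [dotProduct_one, Pi.one_apply, Finset.sum_const, Finset.card_univ, nsmul_eq_mul,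
    mul_one]
  linear_combination -(lam - 2 * n + 2 + 2 * r) * M.det * hsign
end

section
/- Let G be an r-regular simple graph with n vertices and m ≥ 1 edges, and let q_1 ≤ q_2 ≤ … ≤ q_n = 2r be the eigenvalues of Q(G) listed with multiplicity. Then f(λ, G^{+01}) = [(λ-n)(λ-2r-m) - mn]·(λ-n)^{m-1}·∏_{i=1}^{n-1}(λ - m - q_i). -/
open Classical

/-!
In the vertex/edge block decomposition, `Q(G^{+01})` is `[[Q(G) + m I, J], [J, n I]]` with `J`
all-ones. For `λ ≠ n` the Schur complement of the block `(λ - n) I` in `λ I - Q(G^{+01})` is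
`(λ - m) I - Q(G) - (m / (λ - n)) J`. The all-ones vector is an eigenvector of `Q(G)` for `2r`, so
by the matrix determinant lemma subtracting this multiple of `J` only replaces the factor
`λ - m - 2r` of `f(λ - m, G)` by `λ - m - 2r - mn / (λ - n)`. Both sides of the resulting identity
are continuous in `λ` and agree off a finite set, hence everywhere.
-/

open Matrix

namespace Matrix

variable {ι κ K : Type*} [Fintype ι] [DecidableEq ι] [Fintype κ] [DecidableEq κ] [Field K]

theorem mul_det_sub_const_of_mulVec_one {A : Matrix ι ι K} {a : K} (hA : A *ᵥ 1 = a • 1)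
    (hdet : A.det ≠ 0) (c : K) :
    a * (A - of fun _ _ => c).det = A.det * (a - c * Fintype.card ι) := by
  have hunit : IsUnit A.det := isUnit_iff_ne_zero.mpr hdet
  have hinv : a • (A⁻¹ *ᵥ 1) = 1 := by
    rw [← mulVec_smul, ← hA, mulVec_mulVec, nonsing_inv_mul A hunit, one_mulVec]
  have hsum : a * (1 ⬝ᵥ A⁻¹ *ᵥ 1) = Fintype.card ι := by
    rw [← smul_eq_mul, ← dotProduct_smul, hinv]
    simp
  have hrank : -(of fun _ _ => c : Matrix ι ι K) =
      (replicateCol Unit (-c • 1) : Matrix ι Unit K) * (replicateRow Unit 1 : Matrix Unit ι K) := by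
    ext; simp [Matrix.mul_apply]
  rw [sub_eq_add_neg, hrank, det_add_replicateCol_mul_replicateRow hunit, det_unique (1 + _),
    add_apply, one_apply_eq, Matrix.mul_assoc, ← replicateCol_mulVec,
    replicateRow_mul_replicateCol_apply, mulVec_smul, dotProduct_smul, smul_eq_mul]
  linear_combination -A.det * c * hsum

theorem det_fromBlocks_const_const_smul_one (A : Matrix ι ι K) (b c : K) {d : K} (hd : d ≠ 0) :
    (fromBlocks A (of fun _ _ => b) (of fun _ _ => c) (d • 1 : Matrix κ κ K)).det =
      d ^ Fintype.card κ * (A - of fun _ _ => b * c * Fintype.card κ / d).det := by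
  let _ : Invertible (d • 1 : Matrix κ κ K) :=
    ⟨d⁻¹ • 1, by simp [smul_smul, hd], by simp [smul_smul, hd]⟩
  rw [det_fromBlocks₂₂, det_smul, det_one, mul_one,
    show ⅟(d • 1 : Matrix κ κ K) = d⁻¹ • 1 from rfl]
  congr 2
  ext i j
  simp [Matrix.mul_apply, div_eq_mul_inv]
  ring

end Matrix

section

variable {V : Type*} (G : SimpleGraph V)

@[simp]
theorem xyzTransform_adj_inl_inl (x y z : XYZ) (u v : V) :
    (xyzTransform G x y z).Adj (.inl u) (.inl v) ↔ XYZ.rel G x u v := Iff.rfl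

@[simp]
theorem xyzTransform_adj_inr_inr (x y z : XYZ) (e f : G.edgeSet) :
    (xyzTransform G x y z).Adj (.inr e) (.inr f) ↔ XYZ.rel G.lineGraph y e f := Iff.rfl

@[simp]
theorem xyzTransform_adj_inl_inr (x y z : XYZ) (v : V) (e : G.edgeSet) :
    (xyzTransform G x y z).Adj (.inl v) (.inr e) ↔ XYZ.inc G z v e := Iff.rfl

@[simp]
theorem xyzTransform_adj_inr_inl (x y z : XYZ) (e : G.edgeSet) (v : V) :
    (xyzTransform G x y z).Adj (.inr e) (.inl v) ↔ XYZ.inc G z v e := Iff.rfl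

end

section

variable {V : Type*} [Fintype V] (G : SimpleGraph V)

theorem degree_xyzTransform_plus_zero_one_inl (v : V) :
    (xyzTransform G .plus .zero .one).degree (.inl v) = G.degree v + Fintype.card G.edgeSet := by
  rw [← SimpleGraph.card_neighborFinset_eq_degree, ← SimpleGraph.card_neighborFinset_eq_degree,
    ← Finset.card_univ, ← Finset.card_disjSum]
  congr 1
  ext (w | e) <;> simp [XYZ.rel, XYZ.inc]

theorem degree_xyzTransform_plus_zero_one_inr (e : G.edgeSet) :
    (xyzTransform G .plus .zero .one).degree (.inr e) = Fintype.card V := by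
  rw [← SimpleGraph.card_neighborFinset_eq_degree, ← Finset.card_univ,
    ← add_zero Finset.univ.card, ← Finset.card_empty (α := G.edgeSet), ← Finset.card_disjSum]
  congr 1
  ext (w | f) <;> simp [XYZ.rel, XYZ.inc]

theorem signlessLaplacian_xyzTransform_plus_zero_one :
    signlessLaplacian (xyzTransform G .plus .zero .one) =
      fromBlocks (signlessLaplacian G + (Fintype.card G.edgeSet : ℝ) • 1) (of fun _ _ => 1)
        (of fun _ _ => 1) ((Fintype.card V : ℝ) • 1) := by
  ext (u | e) (w | f) <;>
    simp [signlessLaplacian, degree_xyzTransform_plus_zero_one_inl,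
      degree_xyzTransform_plus_zero_one_inr, one_apply, XYZ.rel, XYZ.inc]
  split_ifs <;> ring

theorem signlessLaplacian_mulVec_one {r : ℕ} (hreg : G.IsRegularOfDegree r) :
    signlessLaplacian G *ᵥ 1 = (2 * r : ℝ) • 1 := by
  ext v
  simp only [mulVec, dotProduct, signlessLaplacian, of_apply, hreg v, Pi.one_apply, mul_one,
    Finset.sum_add_distrib, Finset.sum_ite_eq, Finset.mem_univ, ↓reduceIte, Finset.sum_boole,
    Pi.smul_apply, smul_eq_mul]
  rw [← G.neighborFinset_eq_filter, G.card_neighborFinset_eq_degree, hreg v]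
  ring

theorem continuous_fQ : Continuous (fQ G) :=
  (continuous_id.smul continuous_const |>.sub continuous_const).matrix_det

theorem fQ_xyzTransform_plus_zero_one (x : ℝ) :
    fQ (xyzTransform G .plus .zero .one) x =
      (fromBlocks ((x - Fintype.card G.edgeSet) • (1 : Matrix V V ℝ) - signlessLaplacian G)
        (of fun _ _ => -1) (of fun _ _ => -1)
        ((x - Fintype.card V) • (1 : Matrix G.edgeSet G.edgeSet ℝ))).det := by
  rw [fQ, signlessLaplacian_xyzTransform_plus_zero_one]
  congr 1
  ext (u | e) (w | f) <;> simp [one_apply]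
  all_goals split_ifs <;> ring

theorem fQ_xyzTransform_plus_zero_one_of_ne {r : ℕ} (hreg : G.IsRegularOfDegree r) {x : ℝ}
    (hx : x ≠ Fintype.card V) (hG : fQ G (x - Fintype.card G.edgeSet) ≠ 0) :
    (x - Fintype.card V) * (x - Fintype.card G.edgeSet - 2 * r) *
        fQ (xyzTransform G .plus .zero .one) x =
      (x - Fintype.card V) ^ Fintype.card G.edgeSet *
        ((x - Fintype.card V) * (x - Fintype.card G.edgeSet - 2 * r) -
          Fintype.card G.edgeSet * Fintype.card V) * fQ G (x - Fintype.card G.edgeSet) := by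
  set n : ℝ := (Fintype.card V : ℝ)
  set m : ℝ := (Fintype.card G.edgeSet : ℝ)
  set A := (x - m) • (1 : Matrix V V ℝ) - signlessLaplacian G
  have hA : A *ᵥ 1 = (x - m - 2 * r) • 1 := by
    rw [sub_mulVec, smul_mulVec, one_mulVec, signlessLaplacian_mulVec_one G hreg, ← sub_smul]
  have hxn : x - n ≠ 0 := sub_ne_zero.mpr hx
  have hc : (x - n) * (-1 * -1 * m / (x - n)) = m := by field_simp
  have hrank := mul_det_sub_const_of_mulVec_one hA hG (-1 * -1 * m / (x - n))
  rw [show A.det = fQ G (x - m) from rfl] at hrank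
  rw [fQ_xyzTransform_plus_zero_one, det_fromBlocks_const_const_smul_one _ _ _ hxn]
  linear_combination (x - n) ^ (Fintype.card G.edgeSet + 1) * hrank -
    (x - n) ^ Fintype.card G.edgeSet * fQ G (x - m) * n * hc

end

theorem signless_charpoly_xyz_p01 {V : Type*} [Fintype V] (G : SimpleGraph V) (r n m : ℕ)
    (hn : Fintype.card V = n) (hm : Fintype.card G.edgeSet = m)
    (hreg : G.IsRegularOfDegree r) (hm1 : 1 ≤ m) (hn0 : 0 < n)
    (q : Fin n → ℝ)
    (hlast : q ⟨n - 1, by omega⟩ = 2 * r)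
    (hq : ∀ x : ℝ, fQ G x = ∏ i : Fin n, (x - q i)) :
    ∀ lam : ℝ,
      fQ (xyzTransform G XYZ.plus XYZ.zero XYZ.one) lam =
        ((lam - n) * (lam - 2 * r - m) - m * n) * (lam - n) ^ (m - 1) *
          ∏ i : Fin (n - 1), (lam - m - (q (Fin.castLE (Nat.sub_le n 1) i))) := by
  obtain ⟨k, rfl⟩ : ∃ k, n = k + 1 := ⟨n - 1, by omega⟩
  rw [← funext_iff]
  refine (continuous_fQ _).ext_on
    (((Set.finite_range fun i => m + q i).insert ((k + 1 : ℕ) : ℝ)).countable.dense_compl ℝ)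
    (by fun_prop) fun x hx => ?_
  show _ = _ * ∏ i : Fin k, (x - m - q i.castSucc)
  simp only [Set.mem_compl_iff, Set.mem_insert_iff, Set.mem_range, not_or, not_exists] at hx
  have hroot : ∀ i, x - m - q i ≠ 0 := fun i h => hx.2 i (by linarith)
  have hG : fQ G (x - m) ≠ 0 := by
    rw [hq]
    exact Finset.prod_ne_zero_iff.mpr fun i _ => hroot i
  have h := fQ_xyzTransform_plus_zero_one_of_ne G hreg (hn ▸ hx.1) (hm ▸ hG)
  rw [hn, hm, hq, Fin.prod_univ_castSucc, show q (Fin.last k) = 2 * r from hlast,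
    ← pow_sub_one_mul (by omega : m ≠ 0)] at h
  apply mul_left_cancel₀ (mul_ne_zero (sub_ne_zero.mpr hx.1) (hlast ▸ hroot (Fin.last k)))
  linear_combination h
end

section
/- Let G be an r-regular simple graph with n vertices and m edges, where r ≥ 2 (so that m ≥ n), and let q_1 ≤ q_2 ≤ … ≤ q_n = 2r be the eigenvalues of Q(G) listed with multiplicity. Then f(λ, G^{++1}) = [(λ-2r-m)(λ-n-4r+4) - mn]·(λ-n-2r+4)^{m-n}·∏_{i=1}^{n-1}(λ - n - 2r + 4 - q_i)(λ - m - q_i). -/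
open Classical

/-!
Write `R` for the vertex-edge incidence matrix of `G`, so that `Q(G) = R Rᵀ` and
`Rᵀ R = 2 I + A(L(G))`. In `G^{++1}` a vertex has degree `r + m` and an edge has degree
`n + 2r - 2`, hence `λ I - Q(G^{++1})` is the block matrix with diagonal blocks
`A = (λ - m) I - Q(G)` and `D = (λ - n - 2r + 4) I - Rᵀ R` and off-diagonal blocks `-J`.
Both diagonal blocks have constant row sums `a = λ - m - 2r` and `d = λ - n - 4r + 4`, so
eliminating the off-diagonal blocks gives `det = (1 - mn / (ad)) det A det D`, and
`det D = (λ - n - 2r + 4)^(m - n) f(λ - n - 2r + 4, G)` because `Rᵀ R` and `R Rᵀ` have the same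
nonzero spectrum. Splitting off the eigenvalue `2r` from `det A` and `det D` cancels `ad`;
continuity removes the two excluded values of `λ`.
-/

namespace Matrix

variable {K m n : Type*} [Field K] [Fintype m] [Fintype n] [DecidableEq m] [DecidableEq n]

theorem det_fromBlocks_of_mul_eq_smul (A : Matrix m m K) (B : Matrix m n K) (C : Matrix n m K)
    (D : Matrix n n K) {d : K} (hd : d ≠ 0) (hDC : D * C = d • C) :
    (fromBlocks A B C D).det = (A - d⁻¹ • (B * C)).det * D.det := by
  have hfactor : fromBlocks A B C D * fromBlocks 1 0 (-d⁻¹ • C) 1 =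
      fromBlocks (A - d⁻¹ • (B * C)) B 0 D := by
    simp [fromBlocks_multiply, Matrix.mul_smul, hDC, smul_smul, hd, sub_eq_add_neg]
  calc (fromBlocks A B C D).det
      = (fromBlocks A B C D * fromBlocks 1 0 (-d⁻¹ • C) 1).det := by
        rw [det_mul, det_fromBlocks_zero₁₂, det_one, det_one, mul_one, mul_one]
    _ = (A - d⁻¹ • (B * C)).det * D.det := by rw [hfactor, det_fromBlocks_zero₂₁]

omit [Fintype m] [DecidableEq m] [DecidableEq n] in
theorem mul_allOnes_of_sum_row {p : Type*} (A : Matrix m n K) {a : K}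
    (hA : ∀ i, ∑ j, A i j = a) : A * (of fun _ _ => 1 : Matrix n p K) = a • of fun _ _ => 1 := by
  ext i k
  simp [mul_apply, hA]

omit [Fintype m] [DecidableEq m] in
theorem det_sub_smul_allOnes (A : Matrix n n K) {a : K} (ha : a ≠ 0)
    (hA : ∀ i, ∑ j, A i j = a) (t : K) :
    (A - t • of fun _ _ => 1).det = (1 - t * Fintype.card n / a) * A.det := by
  have hAC : A * (t • of fun _ _ => 1 : Matrix n Unit K) = a • t • of fun _ _ => 1 := by
    rw [Matrix.mul_smul, mul_allOnes_of_sum_row A hA, smul_comm]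
  calc (A - t • of fun _ _ => 1).det
      = (fromBlocks (1 : Matrix Unit Unit K) (of fun _ _ => 1) (t • of fun _ _ => 1) A).det := by
        rw [det_fromBlocks_one₁₁]
        congr 2
        ext i j
        simp [mul_apply]
    _ = (1 - t * Fintype.card n / a) * A.det := by
        rw [det_fromBlocks_of_mul_eq_smul _ _ _ _ ha hAC, det_unique]
        congr 1
        simp [mul_apply, div_eq_inv_mul, mul_comm]

theorem det_fromBlocks_neg_allOnes (A : Matrix m m K) (D : Matrix n n K) {a d : K}
    (ha : a ≠ 0) (hd : d ≠ 0) (hA : ∀ i, ∑ j, A i j = a) (hD : ∀ i, ∑ j, D i j = d) :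
    (fromBlocks A (-of fun _ _ => 1) (-of fun _ _ => 1) D).det
      = (1 - Fintype.card m * Fintype.card n / (a * d)) * A.det * D.det := by
  have hDC : D * (-of fun _ _ => 1 : Matrix n m K) = d • -of fun _ _ => 1 := by
    rw [Matrix.mul_neg, mul_allOnes_of_sum_row D hD, smul_neg]
  have hBC : (-of fun _ _ => 1 : Matrix m n K) * (-of fun _ _ => 1 : Matrix n m K) =
      (Fintype.card n : K) • of fun _ _ => 1 := by
    ext i j
    simp [mul_apply]
  rw [det_fromBlocks_of_mul_eq_smul _ _ _ _ hd hDC, hBC, smul_smul, det_sub_smul_allOnes A ha hA]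
  field_simp

omit [Fintype m] [DecidableEq m] in
theorem sum_smul_one_sub_apply (M : Matrix n n K) (t : K) (i : n) :
    ∑ j, (t • 1 - M) i j = t - ∑ j, M i j := by
  simp [Finset.sum_sub_distrib, one_apply]

end Matrix

-- `fQ` is stated with the classical `DecidableEq` instance; this frees it from that choice.
theorem fQ_eq_det {W : Type*} [Fintype W] [DecidableEq W] (H : SimpleGraph W) (t : ℝ) :
    fQ H t = (t • (1 : Matrix W W ℝ) - signlessLaplacian H).det := by
  unfold fQ
  congr!

theorem fQ_eq_eval_charpoly {W : Type*} [Fintype W] (H : SimpleGraph W) (t : ℝ) :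
    fQ H t = (signlessLaplacian H).charpoly.eval t := by
  rw [Matrix.eval_charpoly, fQ, Matrix.smul_one_eq_diagonal, Matrix.scalar_apply]

theorem continuous_fQ_s9 {W : Type*} [Fintype W] (H : SimpleGraph W) : Continuous (fQ H) := by
  rw [funext (fQ_eq_eval_charpoly H)]
  exact Polynomial.continuous _

@[simp] theorem XYZ.rel_plus {W : Type*} (H : SimpleGraph W) {u v : W} :
    XYZ.rel H .plus u v ↔ H.Adj u v := Iff.rfl

@[simp] theorem XYZ.inc_one {W : Type*} (G : SimpleGraph W) {v : W} {e : G.edgeSet} :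
    XYZ.inc G .one v e := trivial

namespace SimpleGraph

open Matrix

section xyzTransform

variable {V : Type*} (G : SimpleGraph V) {x y z : XYZ} {u v : V} {e f : G.edgeSet}

@[simp] theorem xyzTransform_adj_inl_inl :
    (xyzTransform G x y z).Adj (.inl u) (.inl v) ↔ XYZ.rel G x u v := Iff.rfl

@[simp] theorem xyzTransform_adj_inr_inr :
    (xyzTransform G x y z).Adj (.inr e) (.inr f) ↔ XYZ.rel G.lineGraph y e f := Iff.rfl

@[simp] theorem xyzTransform_adj_inl_inr :
    (xyzTransform G x y z).Adj (.inl v) (.inr e) ↔ XYZ.inc G z v e := Iff.rfl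

@[simp] theorem xyzTransform_adj_inr_inl :
    (xyzTransform G x y z).Adj (.inr e) (.inl v) ↔ XYZ.inc G z v e := Iff.rfl

end xyzTransform

variable {V : Type*} [Fintype V] (G : SimpleGraph V)

theorem sum_ite_adj_eq_degree {W : Type*} [Fintype W] (H : SimpleGraph W) (w : W) :
    ∑ u, (if H.Adj w u then 1 else 0 : ℝ) = H.degree w := by
  simp [Finset.sum_boole, ← card_neighborFinset_eq_degree, neighborFinset_eq_filter]

theorem sum_signlessLaplacian_apply {r : ℕ} (hreg : G.IsRegularOfDegree r) (v : V) :
    ∑ u, signlessLaplacian G v u = 2 * r := by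
  simp only [signlessLaplacian, of_apply, Finset.sum_add_distrib, Finset.sum_ite_eq,
    Finset.mem_univ, if_true, sum_ite_adj_eq_degree, hreg v]
  ring

theorem IsRegularOfDegree.card_le_card_edgeSet {G : SimpleGraph V} {r : ℕ}
    (hreg : G.IsRegularOfDegree r) (hr : 2 ≤ r) : Fintype.card V ≤ Fintype.card G.edgeSet := by
  have h := G.sum_degrees_eq_twice_card_edges
  simp only [hreg _, Finset.sum_const, Finset.card_univ, smul_eq_mul, edgeFinset_card] at h
  nlinarith

noncomputable def edgeIncMatrix : Matrix V G.edgeSet ℝ := (G.incMatrix ℝ).submatrix id (↑)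

theorem sum_edgeSet_incMatrix_mul (v : V) (g : Sym2 V → ℝ) :
    ∑ e : G.edgeSet, G.incMatrix ℝ v e * g e = ∑ e, G.incMatrix ℝ v e * g e := by
  refine (Finset.sum_congr_set G.edgeSet (fun e => G.incMatrix ℝ v e * g e) _
    (fun _ _ => rfl) fun e he => ?_).symm
  rw [G.incMatrix_of_notMem_incidenceSet fun h => he h.1, zero_mul]

theorem sum_edgeIncMatrix_apply (v : V) : ∑ e, G.edgeIncMatrix v e = G.degree v := by
  simpa [edgeIncMatrix, sum_incMatrix_apply] using G.sum_edgeSet_incMatrix_mul v 1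

theorem sum_edgeIncMatrix_apply_edge (e : G.edgeSet) : ∑ v, G.edgeIncMatrix v e = 2 :=
  G.sum_incMatrix_apply_of_mem_edgeSet e.2

theorem edgeIncMatrix_mul_transpose :
    G.edgeIncMatrix * G.edgeIncMatrixᵀ = signlessLaplacian G := by
  have h : G.edgeIncMatrix * G.edgeIncMatrixᵀ = G.incMatrix ℝ * (G.incMatrix ℝ)ᵀ := by
    ext u v
    exact G.sum_edgeSet_incMatrix_mul u (G.incMatrix ℝ v)
  rw [h, incMatrix_mul_transpose]
  ext u v
  by_cases huv : u = v
  · subst huv; simp [signlessLaplacian]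
  · simp [signlessLaplacian, huv]

theorem transpose_mul_edgeIncMatrix : G.edgeIncMatrixᵀ * G.edgeIncMatrix =
    of fun e f => if e = f then 2 else if G.lineGraph.Adj e f then 1 else 0 := by
  ext e f
  by_cases hef : e = f
  · subst hef
    rw [of_apply, if_pos rfl]
    exact (G.incMatrix_transpose_mul_diag (e := (e : Sym2 V))).trans (if_pos e.2)
  have hcommon : (Finset.univ.filter fun v => v ∈ (e : Sym2 V) ∧ v ∈ (f : Sym2 V)).card =
      if G.lineGraph.Adj e f then 1 else 0 := by
    split_ifs with hadj
    · obtain ⟨-, w, hwe, hwf⟩ := G.lineGraph_adj_iff_exists.mp hadj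
      refine Finset.card_eq_one.mpr
        ⟨w, Finset.eq_singleton_iff_unique_mem.mpr ⟨by simp [hwe, hwf], fun v hv => ?_⟩⟩
      by_contra hvw
      simp only [Finset.mem_filter, Finset.mem_univ, true_and] at hv
      exact hef (Subtype.ext (Sym2.eq_of_ne_mem hvw hv.1 hwe hv.2 hwf))
    · refine Finset.card_eq_zero.mpr (Finset.filter_eq_empty_iff.mpr fun v _ hv => hadj ?_)
      exact G.lineGraph_adj_iff_exists.mpr ⟨hef, v, hv⟩
  simp only [mul_apply, transpose_apply, edgeIncMatrix, submatrix_apply, id, incMatrix_apply',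
    ite_zero_mul_ite_zero, one_mul, Finset.sum_boole, of_apply, if_neg hef, incidenceSet,
    Set.mem_sep_iff, e.2, f.2, true_and, hcommon]
  split_ifs <;> simp

theorem sum_transpose_mul_edgeIncMatrix_apply {r : ℕ} (hreg : G.IsRegularOfDegree r)
    (e : G.edgeSet) : ∑ f, (G.edgeIncMatrixᵀ * G.edgeIncMatrix) e f = 2 * r := by
  simp only [mul_apply, transpose_apply]
  rw [Finset.sum_comm]
  simp only [← Finset.mul_sum, sum_edgeIncMatrix_apply, hreg _, ← Finset.sum_mul,
    sum_edgeIncMatrix_apply_edge]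

theorem lineGraph_degree_add_two {r : ℕ} (hreg : G.IsRegularOfDegree r) (e : G.edgeSet) :
    (G.lineGraph.degree e : ℝ) + 2 = 2 * r := by
  rw [← G.sum_transpose_mul_edgeIncMatrix_apply hreg e, transpose_mul_edgeIncMatrix]
  have hsplit : ∀ f, (if e = f then 2 else if G.lineGraph.Adj e f then 1 else 0 : ℝ) =
      (if e = f then 2 else 0) + if G.lineGraph.Adj e f then 1 else 0 := by
    intro f
    by_cases hef : e = f
    · subst hef; simp
    · simp [hef]
  simp only [of_apply, hsplit, Finset.sum_add_distrib, Finset.sum_ite_eq, Finset.mem_univ,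
    if_true, sum_ite_adj_eq_degree]
  ring

theorem degree_xyzTransform_inl (y : XYZ) (v : V) :
    (xyzTransform G .plus y .one).degree (.inl v) = G.degree v + Fintype.card G.edgeSet := by
  have : (xyzTransform G .plus y .one).neighborFinset (.inl v) =
      (G.neighborFinset v).disjSum Finset.univ := by
    ext (w | f) <;> simp
  rw [← card_neighborFinset_eq_degree, this, Finset.card_disjSum, card_neighborFinset_eq_degree,
    Finset.card_univ]

theorem degree_xyzTransform_inr (x : XYZ) (e : G.edgeSet) :
    (xyzTransform G x .plus .one).degree (.inr e) = Fintype.card V + G.lineGraph.degree e := by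
  have : (xyzTransform G x .plus .one).neighborFinset (.inr e) =
      Finset.univ.disjSum (G.lineGraph.neighborFinset e) := by
    ext (w | f) <;> simp
  rw [← card_neighborFinset_eq_degree, this, Finset.card_disjSum, card_neighborFinset_eq_degree,
    Finset.card_univ]

theorem smul_one_sub_signlessLaplacian_xyzTransform {r : ℕ} (hreg : G.IsRegularOfDegree r)
    (t : ℝ) :
    t • (1 : Matrix (V ⊕ G.edgeSet) (V ⊕ G.edgeSet) ℝ) -
        signlessLaplacian (xyzTransform G .plus .plus .one) =
      fromBlocks ((t - Fintype.card G.edgeSet) • 1 - signlessLaplacian G) (-of fun _ _ => 1)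
        (-of fun _ _ => 1)
        ((t - Fintype.card V - 2 * r + 4) • 1 - G.edgeIncMatrixᵀ * G.edgeIncMatrix) := by
  ext (u | e) (v | f)
  · by_cases huv : u = v
    · subst huv
      simp only [signlessLaplacian, Matrix.sub_apply, Matrix.smul_apply, one_apply_eq, smul_eq_mul,
        mul_one, of_apply, ↓reduceIte, degree_xyzTransform_inl, Fintype.card_ofFinset, Nat.cast_add,
        SimpleGraph.irrefl, add_zero, neg_of, fromBlocks_apply₁₁]
      ring
    · simp [signlessLaplacian, huv]
  · simp [signlessLaplacian]
  · simp [signlessLaplacian]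
  · by_cases hef : e = f
    · subst hef
      simp only [signlessLaplacian, Matrix.sub_apply, Matrix.smul_apply, one_apply_eq, smul_eq_mul,
        mul_one, of_apply, ↓reduceIte, degree_xyzTransform_inr, Nat.cast_add, SimpleGraph.irrefl,
        add_zero, Fintype.card_ofFinset, neg_of, transpose_mul_edgeIncMatrix, fromBlocks_apply₂₂]
      linarith [G.lineGraph_degree_add_two hreg e]
    · simp [signlessLaplacian, transpose_mul_edgeIncMatrix, hef]

theorem det_smul_one_sub_transpose_mul_edgeIncMatrix
    (hle : Fintype.card V ≤ Fintype.card G.edgeSet) (t : ℝ) :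
    (t • 1 - G.edgeIncMatrixᵀ * G.edgeIncMatrix).det =
      t ^ (Fintype.card G.edgeSet - Fintype.card V) * fQ G t := by
  calc (t • 1 - G.edgeIncMatrixᵀ * G.edgeIncMatrix).det
      = (G.edgeIncMatrixᵀ * G.edgeIncMatrix).charpoly.eval t := by
        rw [eval_charpoly, smul_one_eq_diagonal, scalar_apply]
    _ = t ^ (Fintype.card G.edgeSet - Fintype.card V) * fQ G t := by
        rw [charpoly_mul_comm_of_le _ _ hle, Polynomial.eval_mul, Polynomial.eval_pow,
          Polynomial.eval_X, edgeIncMatrix_mul_transpose, fQ_eq_eval_charpoly]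

theorem fQ_xyzTransform_of_ne {r : ℕ} (hreg : G.IsRegularOfDegree r)
    (hle : Fintype.card V ≤ Fintype.card G.edgeSet) {t : ℝ}
    (ha : t - Fintype.card G.edgeSet - 2 * r ≠ 0) (hd : t - Fintype.card V - 4 * r + 4 ≠ 0) :
    fQ (xyzTransform G .plus .plus .one) t =
      (1 - Fintype.card V * Fintype.card G.edgeSet /
          ((t - Fintype.card G.edgeSet - 2 * r) * (t - Fintype.card V - 4 * r + 4))) *
        fQ G (t - Fintype.card G.edgeSet) *
        ((t - Fintype.card V - 2 * r + 4) ^ (Fintype.card G.edgeSet - Fintype.card V) *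
          fQ G (t - Fintype.card V - 2 * r + 4)) := by
  have hA : ∀ v, ∑ u, ((t - Fintype.card G.edgeSet) • 1 - signlessLaplacian G) v u =
      t - Fintype.card G.edgeSet - 2 * r := fun v => by
    rw [sum_smul_one_sub_apply, G.sum_signlessLaplacian_apply hreg]
  have hD : ∀ e, ∑ f, ((t - Fintype.card V - 2 * r + 4) • (1 : Matrix G.edgeSet G.edgeSet ℝ) -
      G.edgeIncMatrixᵀ * G.edgeIncMatrix) e f = t - Fintype.card V - 4 * r + 4 := fun e => by
    rw [sum_smul_one_sub_apply, G.sum_transpose_mul_edgeIncMatrix_apply hreg]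
    ring
  rw [fQ_eq_det, smul_one_sub_signlessLaplacian_xyzTransform G hreg,
    det_fromBlocks_neg_allOnes _ _ ha hd hA hD, ← fQ_eq_det,
    det_smul_one_sub_transpose_mul_edgeIncMatrix G hle]

open Polynomial in
theorem fQ_xyzTransform {r : ℕ} (hreg : G.IsRegularOfDegree r)
    (hle : Fintype.card V ≤ Fintype.card G.edgeSet) (P : ℝ[X])
    (hP : ∀ x, fQ G x = (x - 2 * r) * P.eval x) :
    ∀ t : ℝ, fQ (xyzTransform G .plus .plus .one) t =
      ((t - 2 * r - Fintype.card G.edgeSet) * (t - Fintype.card V - 4 * r + 4) -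
          Fintype.card G.edgeSet * Fintype.card V) *
        (t - Fintype.card V - 2 * r + 4) ^ (Fintype.card G.edgeSet - Fintype.card V) *
        (P.eval (t - Fintype.card V - 2 * r + 4) * P.eval (t - Fintype.card G.edgeSet)) := by
  refine funext_iff.mp (Continuous.ext_on
    ((Set.toFinite {(Fintype.card G.edgeSet : ℝ) + 2 * r, (Fintype.card V : ℝ) + 4 * r - 4}
      ).countable.dense_compl ℝ) (continuous_fQ_s9 _) (by fun_prop) fun s hs => ?_)
  simp only [Set.mem_compl_iff, Set.mem_insert_iff, Set.mem_singleton_iff, not_or] at hs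
  have ha : s - Fintype.card G.edgeSet - 2 * r ≠ 0 := fun h => hs.1 (by linarith)
  have hd : s - Fintype.card V - 4 * r + 4 ≠ 0 := fun h => hs.2 (by linarith)
  have hcancel : (1 - Fintype.card V * Fintype.card G.edgeSet /
      ((s - Fintype.card G.edgeSet - 2 * r) * (s - Fintype.card V - 4 * r + 4))) *
      (s - Fintype.card G.edgeSet - 2 * r) * (s - Fintype.card V - 4 * r + 4) =
      (s - Fintype.card G.edgeSet - 2 * r) * (s - Fintype.card V - 4 * r + 4) -
        Fintype.card V * Fintype.card G.edgeSet := by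
    rw [mul_assoc, sub_mul, one_mul, div_mul_cancel₀ _ (mul_ne_zero ha hd)]
  rw [fQ_xyzTransform_of_ne G hreg hle ha hd, hP, hP]
  linear_combination ((s - Fintype.card V - 2 * r + 4) ^ (Fintype.card G.edgeSet - Fintype.card V)
    * P.eval (s - Fintype.card V - 2 * r + 4) * P.eval (s - Fintype.card G.edgeSet)) * hcancel

end SimpleGraph

theorem Fin.prod_univ_eq_mul_prod_castLE {M : Type*} [CommMonoid M] {n : ℕ} (hn : 0 < n)
    (f : Fin n → M) :
    ∏ i, f i = f ⟨n - 1, by omega⟩ * ∏ i : Fin (n - 1), f (Fin.castLE (Nat.sub_le n 1) i) := by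
  obtain ⟨k, rfl⟩ : ∃ k, n = k + 1 := ⟨n - 1, by omega⟩
  rw [Fin.prod_univ_castSucc, mul_comm]
  rfl

theorem signless_charpoly_xyz_pp1 {V : Type*} [Fintype V] (G : SimpleGraph V) (r n m : ℕ)
    (hn : Fintype.card V = n) (hm : Fintype.card G.edgeSet = m)
    (hreg : G.IsRegularOfDegree r) (hr2 : 2 ≤ r) (hn0 : 0 < n)
    (q : Fin n → ℝ)
    (hlast : q ⟨n - 1, by omega⟩ = 2 * r)
    (hq : ∀ x : ℝ, fQ G x = ∏ i : Fin n, (x - q i)) :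
    ∀ lam : ℝ,
      fQ (xyzTransform G XYZ.plus XYZ.plus XYZ.one) lam =
        ((lam - 2 * r - m) * (lam - n - 4 * r + 4) - m * n) *
          (lam - n - 2 * r + 4) ^ (m - n) *
          ∏ i : Fin (n - 1), ((lam - n - 2 * r + 4 - (q (Fin.castLE (Nat.sub_le n 1) i))) * (lam - m - (q (Fin.castLE (Nat.sub_le n 1) i)))) := by
  subst hn hm
  set P : Polynomial ℝ := ∏ i : Fin (Fintype.card V - 1),
    (Polynomial.X - Polynomial.C (q (Fin.castLE (Nat.sub_le _ 1) i)))
  have hP : ∀ x, fQ G x = (x - 2 * r) * P.eval x := fun x => by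
    rw [hq, Fin.prod_univ_eq_mul_prod_castLE hn0, hlast, Polynomial.eval_prod]
    simp
  intro lam
  rw [G.fQ_xyzTransform hreg (hreg.card_le_card_edgeSet hr2) P hP, Polynomial.eval_prod,
    Polynomial.eval_prod, ← Finset.prod_mul_distrib]
  simp
end
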